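/- arXiv:2209.15586 — 6 statements merged into one kernel-verified Lean document; each statement's English description precedes it below -/
import Mathlib

section
/- Define coefficients a_k by a_{-1} = 0, a_0 = 1, and a_k = 2*a_{k-1} - a_{k-2} + C(r+1, k) * r^k for k ≥ 1, where r ≥ 1 is a fixed integer. Then for all real x, y, (x + r*y)^(r+1) - (r+1)^(r+1) * x * y^r = (x - y)^2 * ∑_{k=0}^{r-1} a_k * x^(r-1-k) * y^k. -/
/-!
Multiplying the binary form `∑ b k x^(n-k) y^k` by `x - y` replaces its coefficients by their
backward differences, up to a boundary term in `y^(n+1)`. The recurrence says that the second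
difference of `a` is `c k = C(r+1, k) r^k`, the coefficient sequence of `(x + r y)^(r+1)`, so
`(x - y)^2 ∑ a_k x^(r-1-k) y^k` is `(x + r y)^(r+1)` minus two boundary terms involving `a_r` and
`a_{r+1} - a_r`. Summing the second differences gives `a_k = ∑_{j ≤ k} (k + 1 - j) c_j`, and the
binomial theorem turns this into `a_r = a_{r+1} - a_r = (r+1)^(r+1)`, which collapses the boundary
terms to `(r+1)^(r+1) x y^r`.
-/

open Finset

section

variable {G : Type*} [AddCommGroup G]

/-- `bwdDiff b k = b k - b (k - 1)` with the convention `b (-1) = 0`. -/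
def bwdDiff (b : ℕ → G) : ℕ → G
  | 0 => b 0
  | k + 1 => b (k + 1) - b k

theorem sum_range_bwdDiff (b : ℕ → G) (k : ℕ) : ∑ j ∈ range (k + 1), bwdDiff b j = b k := by
  induction k with
  | zero => simp [bwdDiff]
  | succ k ih => rw [sum_range_succ, ih, bwdDiff]; abel

end

section

variable {R : Type*} [CommRing R]

def homogSum (b : ℕ → R) (n : ℕ) (x y : R) : R :=
  ∑ p ∈ antidiagonal n, b p.1 * x ^ p.2 * y ^ p.1

theorem homogSum_eq_sum_range (b : ℕ → R) (n : ℕ) (x y : R) :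
    homogSum b n x y = ∑ k ∈ range (n + 1), b k * x ^ (n - k) * y ^ k :=
  Nat.sum_antidiagonal_eq_sum_range_succ_mk _ n

theorem sub_mul_homogSum (b : ℕ → R) (n : ℕ) (x y : R) :
    (x - y) * homogSum b n x y = homogSum (bwdDiff b) (n + 1) x y - b (n + 1) * y ^ (n + 1) := by
  have top : homogSum b (n + 1) x y = b (n + 1) * y ^ (n + 1) + x * homogSum b n x y := by
    simp only [homogSum, Nat.sum_antidiagonal_succ', mul_sum]
    congr 1
    · simp
    · exact sum_congr rfl fun p _ => by ring
  have bottom :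
      homogSum (bwdDiff b) (n + 1) x y = homogSum b (n + 1) x y - y * homogSum b n x y := by
    simp only [homogSum, Nat.sum_antidiagonal_succ, mul_sum, bwdDiff]
    rw [add_sub_assoc, ← sum_sub_distrib]
    exact congrArg _ (sum_congr rfl fun p _ => by ring)
  rw [bottom, top]
  ring

theorem homogSum_choose_mul_pow (n : ℕ) (t x y : R) :
    homogSum (fun k => (n.choose k : R) * t ^ k) n x y = (x + t * y) ^ n := by
  rw [add_comm, (Commute.all _ _).add_pow', homogSum]
  exact sum_congr rfl fun p _ => by rw [nsmul_eq_mul]; ring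

theorem eq_sum_range_mul_bwdDiff_bwdDiff (b : ℕ → R) (k : ℕ) :
    b k = ∑ j ∈ range (k + 1), ((k + 1 - j : ℕ) : R) * bwdDiff (bwdDiff b) j := by
  induction k with
  | zero => simp [bwdDiff]
  | succ k ih =>
    have weight : ∀ j ∈ range (k + 1), ((k + 1 + 1 - j : ℕ) : R) = ((k + 1 - j : ℕ) : R) + 1 := by
      intro j hj
      rw [Nat.sub_add_comm (mem_range.mp hj).le]
      push_cast
      ring
    have hb : b (k + 1) = b k + bwdDiff b (k + 1) := by rw [bwdDiff]; ring
    rw [sum_range_succ, sum_congr rfl fun j hj => by rw [weight j hj], Nat.add_sub_cancel_left,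
      hb, ← sum_range_bwdDiff (bwdDiff b) (k + 1), sum_range_succ, ih]
    simp only [add_mul, one_mul, sum_add_distrib, Nat.cast_one]
    ring

theorem bwdDiff_bwdDiff_eq_of_rec {a d : ℕ → R} (h0 : a 0 = d 0) (h1 : a 1 = 2 * a 0 + d 1)
    (hrec : ∀ k, a (k + 2) = 2 * a (k + 1) - a k + d (k + 2)) : bwdDiff (bwdDiff a) = d := by
  funext k
  rcases k with _ | _ | k
  · exact h0
  · simp only [bwdDiff]; rw [h1]; ring
  · simp only [bwdDiff]; rw [hrec]; ring

theorem sum_range_sub_mul_choose_mul_pow (n : ℕ) (t : R) :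
    ∑ j ∈ range (n + 1), ((n + 1 - j : ℕ) : R) * ((n + 1).choose j * t ^ j)
      = (n + 1) * (t + 1) ^ n := by
  rw [add_pow, mul_sum]
  refine sum_congr rfl fun j _ => ?_
  have h := congrArg (Nat.cast (R := R)) (Nat.choose_mul_succ_eq n j)
  push_cast at h
  linear_combination (-t ^ j) * h

end

theorem stmt_2 (r : ℕ) (hr : 1 ≤ r) (a : ℕ → ℝ)
    (h0 : a 0 = 1)
    (h1 : a 1 = 2 * a 0 + (r + 1).choose 1 * (r : ℝ) ^ 1)
    (hrec : ∀ k : ℕ, a (k + 2) = 2 * a (k + 1) - a k + (r + 1).choose (k + 2) * (r : ℝ) ^ (k + 2))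
    (x y : ℝ) :
    (x + r * y) ^ (r + 1) - (r + 1 : ℝ) ^ (r + 1) * x * y ^ r
      = (x - y) ^ 2 * ∑ k ∈ Finset.range r, a k * x ^ (r - 1 - k) * y ^ k := by
  obtain ⟨m, rfl⟩ := Nat.exists_eq_add_of_le' hr
  have hc : bwdDiff (bwdDiff a) = fun k => ((m + 1 + 1).choose k : ℝ) * ((m + 1 : ℕ) : ℝ) ^ k :=
    bwdDiff_bwdDiff_eq_of_rec (by simpa using h0) h1 hrec
  have ha : a (m + 1) = ((m + 1 : ℕ) + 1 : ℝ) ^ (m + 1 + 1) := by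
    rw [eq_sum_range_mul_bwdDiff_bwdDiff a, hc, sum_range_sub_mul_choose_mul_pow]
    push_cast
    ring
  have hda : bwdDiff a (m + 1 + 1) = ((m + 1 : ℕ) + 1 : ℝ) ^ (m + 1 + 1) := by
    rw [← sum_range_bwdDiff (bwdDiff a), hc]
    simpa [homogSum_eq_sum_range, add_comm] using
      homogSum_choose_mul_pow (m + 1 + 1) ((m + 1 : ℕ) : ℝ) 1 1
  rw [Nat.add_sub_cancel, ← homogSum_eq_sum_range, sq, mul_assoc (x - y), sub_mul_homogSum,
    mul_sub, sub_mul_homogSum, hc, homogSum_choose_mul_pow]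
  linear_combination y ^ (m + 1 + 1) * hda + (x - y) * y ^ (m + 1) * ha
end

section
/- With a_k defined by a_{-1} = 0, a_0 = 1, a_k = 2*a_{k-1} - a_{k-2} + C(r+1,k)*r^k for k ≥ 1 (r ≥ 1 a fixed integer), one has a_{r-1} = r^(r+1). -/
open Finset

theorem stmt_4 (r : ℕ) (hr : 1 ≤ r) (a : ℕ → ℝ)
    (h0 : a 0 = 1)
    (h1 : a 1 = 2 * a 0 + (r + 1).choose 1 * (r : ℝ) ^ 1)
    (hrec : ∀ k : ℕ, a (k + 2) = 2 * a (k + 1) - a k + (r + 1).choose (k + 2) * (r : ℝ) ^ (k + 2)) :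
    a (r - 1) = (r : ℝ) ^ (r + 1) := by
  set c : ℕ → ℝ := fun j => ((r+1).choose j : ℝ) * (r:ℝ)^j with hc
  set A : ℕ → ℝ := fun n => ∑ j ∈ range (n+1), ((n:ℝ)+1-j) * c j with hAdef
  have step : ∀ n : ℕ, A (n+1) = A n + ∑ j ∈ range (n+2), c j := by
    intro n
    have h : ∀ j ∈ range (n+2), (((n+1:ℕ):ℝ)+1-(j:ℝ)) * c j
        = ((n:ℝ)+1-(j:ℝ)) * c j + c j := by
      intro j _; push_cast; ring
    show ∑ j ∈ range (n+1+1), (((n+1:ℕ):ℝ)+1-(j:ℝ)) * c j = _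
    rw [show n+1+1 = n+2 from rfl, Finset.sum_congr rfl h, Finset.sum_add_distrib,
      show n+2 = n+1+1 from rfl,
      Finset.sum_range_succ (fun j => ((n:ℝ)+1-(j:ℝ)) * c j) (n+1)]
    show _ = A n + _
    rw [hAdef]
    push_cast
    ring
  have key : ∀ n : ℕ, A (n+2) = 2 * A (n+1) - A n + c (n+2) := by
    intro n
    have s1 := step (n+1)
    have s0 := step n
    have k3 := Finset.sum_range_succ c (n+2)
    rw [show n+1+2 = n+2+1 from by omega] at s1
    rw [show n+1+1 = n+2 from rfl] at s1
    linear_combination s1 - s0 + k3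
  have hA : ∀ k, a k = A k := by
    intro k
    induction k using Nat.twoStepInduction with
    | zero => simp [hAdef, hc, h0]
    | one =>
      rw [h1, h0, hAdef]
      show _ = ∑ j ∈ range 2, _
      rw [Finset.sum_range_succ, Finset.sum_range_one]
      simp [hc]
      ring
    | more k ih1 ih2 =>
      rw [hrec k, ih1, ih2, key k, hc]
  -- binomial sums
  have hbin : ∑ j ∈ range (r+2), c j = ((r:ℝ)+1)^(r+1) := by
    have := add_pow (r:ℝ) 1 (r+1)
    simp only [one_pow, mul_one] at this
    rw [hc, this]
    exact Finset.sum_congr rfl (fun j _ => by ring)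
  have hbin' : ∑ j ∈ range (r+1), ((r.choose j : ℝ) * (r:ℝ)^j) = ((r:ℝ)+1)^r := by
    have := add_pow (r:ℝ) 1 r
    simp only [one_pow, mul_one] at this
    rw [this]
    exact Finset.sum_congr rfl (fun j _ => by ring)
  have hsum2 : ∑ j ∈ range (r+2), (j:ℝ) * c j = ((r:ℝ)+1) * r * ((r:ℝ)+1)^r := by
    rw [Finset.sum_range_succ' (fun j => (j:ℝ) * c j) (r+1)]
    simp only [Nat.cast_zero, zero_mul, add_zero]
    push_cast
    have h : ∀ k ∈ range (r+1), ((k:ℝ)+1) * c (k+1)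
        = ((r:ℝ)+1) * (r:ℝ) * ((r.choose k : ℝ) * (r:ℝ)^k) := by
      intro k _
      have hn := Nat.add_one_mul_choose_eq r k
      have hn' : (((r+1).choose (k+1) : ℝ)) * ((k:ℝ)+1) = ((r:ℝ)+1) * (r.choose k : ℝ) := by
        have : (r+1) * r.choose k = (r+1).choose (k+1) * (k+1) := by
          simpa [Nat.succ_eq_add_one] using hn
        exact_mod_cast this.symm
      simp only [hc]
      rw [pow_succ]
      linear_combination ((r:ℝ)^k * (r:ℝ)) * hn'
    calc ∑ k ∈ range (r+1), ((k:ℝ)+1) * c (k+1)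
        = ∑ k ∈ range (r+1), ((r:ℝ)+1) * (r:ℝ) * ((r.choose k : ℝ) * (r:ℝ)^k) :=
          Finset.sum_congr rfl h
      _ = ((r:ℝ)+1) * r * ((r:ℝ)+1)^r := by
          rw [← Finset.mul_sum, hbin']
  have hzero : ∑ j ∈ range (r+2), ((r:ℝ) - j) * c j = 0 := by
    have h : ∀ j ∈ range (r+2), ((r:ℝ) - j) * c j = (r:ℝ) * c j - (j:ℝ) * c j := by
      intro j _; ring
    rw [Finset.sum_congr rfl h, Finset.sum_sub_distrib, ← Finset.mul_sum, hbin, hsum2]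
    ring
  -- finish
  have hrw : r - 1 + 1 = r := Nat.succ_pred_eq_of_pos hr
  have hcast : ((r - 1 : ℕ) : ℝ) + 1 = (r : ℝ) := by
    rw [Nat.cast_sub hr]; push_cast; ring
  have ha : a (r-1) = ∑ j ∈ range r, ((r:ℝ) - j) * c j := by
    rw [hA (r-1), hAdef]
    show (∑ j ∈ range (r-1+1), (((r-1:ℕ):ℝ)+1-j) * c j) = _
    rw [hrw]
    exact Finset.sum_congr rfl (fun j _ => by rw [hcast])
  have hsplit : ∑ j ∈ range (r+2), ((r:ℝ) - j) * c j
      = (∑ j ∈ range r, ((r:ℝ) - j) * c j) + ((r:ℝ) - r) * c r + ((r:ℝ) - ((r:ℝ)+1)) * c (r+1) := by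
    rw [show r+2 = r+1+1 from rfl, Finset.sum_range_succ, Finset.sum_range_succ]
    push_cast; ring
  rw [ha]
  have hfin : (∑ j ∈ range r, ((r:ℝ) - j) * c j) = c (r+1) := by
    have h := hzero
    rw [hsplit] at h
    linarith [h]
  rw [hfin]
  simp [hc]
end

section
/- Let r ≥ 2 be an integer and define P(x, y) = ((x + r*y)^(r+1) - (r+1)^(r+1) * x * y^r) / (x - y)^2 for x ≠ y. Then for all positive reals x, y with x ≠ y, P(x, y) < r^(r+2) * (x + r*y)^(r-1), i.e. P(x,y)/(x + r*y)^(r-1) < r^(r+2). -/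
/-!
Put `a = (r + 1) y` and `d = x - y`, so that `a + d = x + r y` and
`(r + 1)^(r + 1) x y^r = a^(r + 1) + (r + 1) a^r d`. The numerator is then the binomial expansion
of `(a + d)^(r + 1)` minus its first two terms, so `P(x, y)` is the tail
`∑ C(r + 1, k + 2) a^(r - 1 - k) d^k`. Both `|a|` and `|d|` are at most `2 (x + r y)` and these
binomial coefficients sum to less than `2^(r + 1)`, whence
`P(x, y) < 4^r (x + r y)^(r - 1) ≤ r^(r + 2) (x + r y)^(r - 1)`.
-/

open Finset

section

variable {R : Type*}

def powTail [CommSemiring R] (r : ℕ) (a d : R) : R :=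
  ∑ k ∈ range r, ((r + 1).choose (k + 2) : R) * a ^ (r - 1 - k) * d ^ k

theorem add_pow_succ_eq_powTail [CommSemiring R] (r : ℕ) (a d : R) :
    (a + d) ^ (r + 1) = a ^ (r + 1) + (r + 1) * a ^ r * d + d ^ 2 * powTail r a d := by
  rw [add_comm a d, add_pow, sum_range_succ', sum_range_succ', powTail, mul_sum]
  have hterm (k : ℕ) : d ^ (k + 1 + 1) * a ^ (r + 1 - (k + 1 + 1)) *
      ((r + 1).choose (k + 1 + 1) : R) =
        d ^ 2 * (((r + 1).choose (k + 2) : R) * a ^ (r - 1 - k) * d ^ k) := by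
    rw [show r + 1 - (k + 1 + 1) = r - 1 - k by omega]
    ring
  rw [sum_congr rfl fun k _ => hterm k]
  simp only [zero_add, pow_zero, pow_one, one_mul, Nat.choose_zero_right, Nat.choose_one_right,
    Nat.sub_zero, Nat.add_sub_cancel]
  push_cast
  ring

theorem sum_range_choose_add_two_lt (r : ℕ) :
    ∑ k ∈ range r, (r + 1).choose (k + 2) < 2 ^ (r + 1) := by
  rw [← Nat.sum_range_choose, sum_range_succ', sum_range_succ', Nat.choose_zero_right]
  simp only [add_assoc, Nat.reduceAdd]
  omega

theorem powTail_lt [CommRing R] [LinearOrder R] [IsStrictOrderedRing R] (r : ℕ) {a d M : R}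
    (ha : |a| ≤ M) (hd : |d| ≤ M) (hM : 0 < M) :
    powTail r a d < 2 ^ (r + 1) * M ^ (r - 1) := by
  have hterm : ∀ k ∈ range r, ((r + 1).choose (k + 2) : R) * a ^ (r - 1 - k) * d ^ k
      ≤ (r + 1).choose (k + 2) * M ^ (r - 1) := by
    intro k hkr
    have hk : r - 1 - k + k = r - 1 := by simp only [mem_range] at hkr; omega
    rw [mul_assoc]
    refine mul_le_mul_of_nonneg_left ?_ (Nat.cast_nonneg _)
    calc a ^ (r - 1 - k) * d ^ k ≤ |a ^ (r - 1 - k) * d ^ k| := le_abs_self _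
      _ = |a| ^ (r - 1 - k) * |d| ^ k := by rw [abs_mul, abs_pow, abs_pow]
      _ ≤ M ^ (r - 1 - k) * M ^ k := by gcongr
      _ = M ^ (r - 1) := by rw [← pow_add, hk]
  have hsum : (∑ k ∈ range r, ((r + 1).choose (k + 2) : R)) < 2 ^ (r + 1) := by
    exact_mod_cast sum_range_choose_add_two_lt r
  calc powTail r a d ≤ ∑ k ∈ range r, ((r + 1).choose (k + 2) : R) * M ^ (r - 1) :=
        sum_le_sum hterm
    _ = (∑ k ∈ range r, ((r + 1).choose (k + 2) : R)) * M ^ (r - 1) := (sum_mul ..).symm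
    _ < 2 ^ (r + 1) * M ^ (r - 1) := by gcongr

theorem four_pow_le_pow_add_two {r : ℕ} (hr : 2 ≤ r) : 4 ^ r ≤ r ^ (r + 2) := by
  rcases (show r = 2 ∨ r = 3 ∨ 4 ≤ r by omega) with rfl | rfl | hr4
  · norm_num
  · norm_num
  · calc 4 ^ r ≤ r ^ r := Nat.pow_le_pow_left hr4 r
      _ ≤ r ^ (r + 2) := Nat.pow_le_pow_right (by omega) (by omega)

end

theorem stmt_5 (r : ℕ) (hr : 2 ≤ r) (x y : ℝ) (hx : 0 < x) (hy : 0 < y) (hxy : x ≠ y) :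
    ((x + r * y) ^ (r + 1) - (r + 1 : ℝ) ^ (r + 1) * x * y ^ r) / (x - y) ^ 2
      < (r : ℝ) ^ (r + 2) * (x + r * y) ^ (r - 1) := by
  set s := x + r * y
  have hr' : (2 : ℝ) ≤ r := by exact_mod_cast hr
  have hs : 0 < s := by positivity
  have hnum : s ^ (r + 1) - (r + 1 : ℝ) ^ (r + 1) * x * y ^ r
      = (x - y) ^ 2 * powTail r ((r + 1) * y) (x - y) := by
    have := add_pow_succ_eq_powTail r ((r + 1 : ℝ) * y) (x - y)
    rw [show (r + 1 : ℝ) * y + (x - y) = s by ring] at this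
    rw [this, mul_pow, mul_pow]
    ring
  rw [hnum, mul_div_cancel_left₀ _ (pow_ne_zero 2 (sub_ne_zero.mpr hxy))]
  have ha : |(r + 1 : ℝ) * y| ≤ 2 * s := by
    rw [abs_of_pos (by positivity)]; nlinarith
  have hd : |x - y| ≤ 2 * s := by
    rw [abs_le]; constructor <;> nlinarith
  have h4 : (4 : ℝ) ^ r ≤ (r : ℝ) ^ (r + 2) := by exact_mod_cast four_pow_le_pow_add_two hr
  calc powTail r ((r + 1) * y) (x - y) < 2 ^ (r + 1) * (2 * s) ^ (r - 1) :=
        powTail_lt r ha hd (by positivity)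
    _ = 4 ^ r * s ^ (r - 1) := by
        rw [mul_pow, ← mul_assoc, ← pow_add, show r + 1 + (r - 1) = 2 * r by omega, pow_mul]
        norm_num
    _ ≤ (r : ℝ) ^ (r + 2) * s ^ (r - 1) := by gcongr
end

section
/- Let r ≥ 2 and let a, b, p, q be positive reals with a*q ≠ b*p and N = p^r*q. Then a*q + r*b*p - (r+1)*(a*b^r*N)^(1/(r+1)) < r^(r+2) * (a*q - b*p)^2 / (a*q + r*b*p). -/
/-!
Put `x = a q` and `y = b p`, so that `a b^r N = x y^r`. The weighted harmonic–geometric mean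
inequality with weights `1/(r+1)` and `r/(r+1)` gives `(x y^r)^(1/(r+1)) ≥ (r+1) x y / (y + r x)`,
and `(x + r y)(y + r x) - (r+1)^2 x y = r (x - y)^2`, so the left-hand side is at most
`r (x - y)^2 / (y + r x)`. For `r ≥ 2` this is strictly smaller than the claimed bound.
-/

open Real

theorem Real.harm_mean_le_geom_mean2_weighted {w₁ w₂ p₁ p₂ : ℝ} (hw₁ : 0 ≤ w₁) (hw₂ : 0 ≤ w₂)
    (hp₁ : 0 < p₁) (hp₂ : 0 < p₂) (hw : w₁ + w₂ = 1) :
    (w₁ / p₁ + w₂ / p₂)⁻¹ ≤ p₁ ^ w₁ * p₂ ^ w₂ := by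
  have h := geom_mean_le_arith_mean2_weighted hw₁ hw₂ (inv_nonneg.2 hp₁.le)
    (inv_nonneg.2 hp₂.le) hw
  rw [inv_rpow hp₁.le, inv_rpow hp₂.le, ← mul_inv] at h
  simpa only [div_eq_mul_inv] using inv_le_of_inv_le₀ (by positivity) h

theorem succ_mul_mul_div_le_rpow (r : ℕ) {x y : ℝ} (hx : 0 < x) (hy : 0 < y) :
    (r + 1) * x * y / (y + r * x) ≤ (x * y ^ r) ^ ((1 : ℝ) / (r + 1)) := by
  have hw : (1 : ℝ) / (r + 1) + r / (r + 1) = 1 := by field_simp; ring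
  have h := harm_mean_le_geom_mean2_weighted (by positivity) (by positivity) hx hy hw
  have hharm : ((1 : ℝ) / (r + 1) / x + r / (r + 1) / y)⁻¹ = (r + 1) * x * y / (y + r * x) := by
    field_simp
  have hgeom : x ^ ((1 : ℝ) / (r + 1)) * y ^ ((r : ℝ) / (r + 1))
      = (x * y ^ r) ^ ((1 : ℝ) / (r + 1)) := by
    rw [mul_rpow hx.le (by positivity), ← rpow_natCast y r, ← rpow_mul hy.le, mul_one_div]
  rwa [hharm, hgeom] at h

theorem add_mul_sub_succ_mul_rpow_le (r : ℕ) {x y : ℝ} (hx : 0 < x) (hy : 0 < y) :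
    x + r * y - (r + 1) * (x * y ^ r) ^ ((1 : ℝ) / (r + 1)) ≤ r * (x - y) ^ 2 / (y + r * x) := by
  have hD : 0 < y + r * x := by positivity
  have hgm := (div_le_iff₀ hD).1 (succ_mul_mul_div_le_rpow r hx hy)
  rw [le_div_iff₀ hD]
  nlinarith [mul_le_mul_of_nonneg_left hgm (by positivity : (0 : ℝ) ≤ r + 1)]

theorem div_add_mul_lt_pow_div_add_mul {r : ℕ} (hr : 2 ≤ r) {x y : ℝ} (hx : 0 < x) (hy : 0 < y) :
    r / (y + r * x) < (r : ℝ) ^ (r + 2) / (x + r * y) := by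
  have hr1 : (1 : ℝ) < r := by exact_mod_cast hr
  have hsq : (r : ℝ) ^ 2 < r ^ (r + 2) := pow_lt_pow_right₀ hr1 (by omega)
  have hone : (1 : ℝ) < r ^ (r + 2) := one_lt_pow₀ hr1 (by omega)
  rw [div_lt_div_iff₀ (by positivity) (by positivity)]
  nlinarith [mul_lt_mul_of_pos_right hsq hy, mul_lt_mul_of_pos_right hone (by positivity : 0 < r * x)]

theorem add_mul_sub_succ_mul_rpow_lt {r : ℕ} (hr : 2 ≤ r) {x y : ℝ} (hx : 0 < x) (hy : 0 < y)
    (hne : x ≠ y) :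
    x + r * y - (r + 1) * (x * y ^ r) ^ ((1 : ℝ) / (r + 1))
      < (r : ℝ) ^ (r + 2) * (x - y) ^ 2 / (x + r * y) := by
  have hsq : 0 < (x - y) ^ 2 := by positivity [sub_ne_zero.2 hne]
  calc x + r * y - (r + 1) * (x * y ^ r) ^ ((1 : ℝ) / (r + 1))
      ≤ r / (y + r * x) * (x - y) ^ 2 := by
        rw [div_mul_eq_mul_div]; exact add_mul_sub_succ_mul_rpow_le r hx hy
    _ < (r : ℝ) ^ (r + 2) / (x + r * y) * (x - y) ^ 2 :=
        mul_lt_mul_of_pos_right (div_add_mul_lt_pow_div_add_mul hr hx hy) hsq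
    _ = (r : ℝ) ^ (r + 2) * (x - y) ^ 2 / (x + r * y) := div_mul_eq_mul_div _ _ _

theorem stmt_8 (r : ℕ) (hr : 2 ≤ r) (a b p q N : ℝ)
    (ha : 0 < a) (hb : 0 < b) (hp : 0 < p) (hq : 0 < q)
    (hne : a * q ≠ b * p) (hN : N = p ^ r * q) :
    a * q + r * b * p - (r + 1) * (a * b ^ r * N) ^ ((1 : ℝ) / (r + 1))
      < (r : ℝ) ^ (r + 2) * (a * q - b * p) ^ 2 / (a * q + r * b * p) := by
  have hprod : a * b ^ r * N = (a * q) * (b * p) ^ r := by rw [hN]; ring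
  rw [hprod, mul_assoc (r : ℝ) b p]
  exact add_mul_sub_succ_mul_rpow_lt hr (mul_pos ha hq) (mul_pos hb hp) hne
end

section
/- Let r ≥ 2, j ≥ 0 be integers, N a positive integer, B = N^(1/(r+2)) * 2^(−(2r+1)j/3) > 1, and suppose N = p^r * q with 2^j * N^(1/(r+2)) ≤ p ≤ 2^(j+1) * N^(1/(r+2)). Then there exist positive integers a, b with a ≤ ⌈2^((r+2)j/3 + r + 1)⌉, b ≤ B, and a*q + r*b*p − (r+1)*(a*b^r*N)^(1/(r+1)) < (r^(r+3/2)/sqrt(a*b)) * N^(1/(2(r+2))) * 2^((1−r)j/6 − 1). -/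
/-!
Put `u = N^(1/(r+2))` and `t = 2^(j/3)`, so that `t³u ≤ p ≤ 2t³u`, `B = u / t^(2r+1)` and
`q p^r = u^(r+2)`. Dirichlet's approximation theorem for `p/q` with denominators at most `B`
gives `a, b ≥ 1` with `b ≤ B` and `|aq - bp| < q/B`. With `x = aq`, `y = bp` the quantity to be
bounded is `x + r y - (r+1) (x y^r)^(1/(r+1))`, which Bernoulli's inequality bounds by
`(x - y)²/x < q/(B²a)`; the size constraints on `p` and `q` turn this into the stated bound.
-/

open Real

lemma add_one_mul_pow_mul_le (n : ℕ) {X Y : ℝ} (hX : 0 < X) (hY : 0 ≤ Y) :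
    (n + 1) * X ^ n * Y ≤ n * X ^ (n + 1) + Y ^ (n + 1) := by
  have h := one_add_mul_le_pow (a := Y / X - 1) (by linarith [div_nonneg hY hX.le]) (n + 1)
  rw [add_sub_cancel, div_pow, le_div_iff₀ (by positivity)] at h
  have e : (1 + ((n + 1 : ℕ) : ℝ) * (Y / X - 1)) * X ^ (n + 1)
      = (n + 1) * X ^ n * Y - n * X ^ (n + 1) := by
    field_simp
    push_cast
    ring
  linarith

theorem add_mul_sub_mul_rpow_le (n : ℕ) {x y : ℝ} (hx : 0 < x) (hy : 0 ≤ y) :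
    x + n * y - (n + 1) * (x * y ^ n) ^ (1 / (n + 1 : ℝ)) ≤ (x - y) ^ 2 / x := by
  have e : 1 / (n + 1 : ℝ) = ((n + 1 : ℕ) : ℝ)⁻¹ := by push_cast; rw [one_div]
  obtain ⟨X, hX, rfl⟩ : ∃ X, 0 < X ∧ X ^ (n + 1) = x :=
    ⟨x ^ (1 / (n + 1 : ℝ)), rpow_pos_of_pos hx _,
      by rw [e, rpow_inv_natCast_pow hx.le (by omega)]⟩
  obtain ⟨Y, hY, rfl⟩ : ∃ Y, 0 ≤ Y ∧ Y ^ (n + 1) = y :=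
    ⟨y ^ (1 / (n + 1 : ℝ)), by positivity, by rw [e, rpow_inv_natCast_pow hy (by omega)]⟩
  rw [show X ^ (n + 1) * (Y ^ (n + 1)) ^ n = (X * Y ^ n) ^ (n + 1) by ring, e,
    pow_rpow_inv_natCast (by positivity) (by omega), le_div_iff₀ (by positivity)]
  have h := mul_le_mul_of_nonneg_left (add_one_mul_pow_mul_le (n + 1) hX hY) (pow_nonneg hY n)
  push_cast at h
  linear_combination h

theorem exists_nat_abs_mul_sub_lt_div {p q B : ℝ} (hq : 0 < q) (hB : 1 < B) (hqB : q ≤ B * p) :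
    ∃ a b : ℕ, 0 < a ∧ 0 < b ∧ (b : ℝ) ≤ B ∧ |a * q - b * p| < q / B := by
  have hm : 0 < ⌊B⌋₊ := Nat.floor_pos.mpr hB.le
  obtain ⟨a, b, hb, hbm, hab⟩ := exists_int_int_abs_mul_sub_le (p / q) hm
  have hbB : (b : ℝ) ≤ B := (Int.cast_le.mpr hbm).trans (Nat.floor_le (by linarith))
  have hclose : |a * q - b * p| < q / B := by
    rw [show (a : ℝ) * q - b * p = -((b * (p / q) - a) * q) by field_simp; ring, abs_neg,
      abs_mul, abs_of_pos hq]
    calc |b * (p / q) - a| * q ≤ 1 / (⌊B⌋₊ + 1) * q := by gcongr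
      _ < q / B := by
        rw [one_div_mul_eq_div]
        gcongr
        exact Nat.lt_floor_add_one B
  have hp : 0 < p := pos_of_mul_pos_right (hq.trans_le hqB) (by linarith)
  have ha : 0 < a := by
    have hb1 : (1 : ℝ) ≤ b := by exact_mod_cast hb
    have : q / B ≤ p := (div_le_iff₀' (by linarith)).mpr hqB
    have : 0 < (a : ℝ) * q := by nlinarith [(abs_lt.mp hclose).1]
    exact_mod_cast pos_of_mul_pos_left this hq.le
  lift a to ℕ using ha.le
  lift b to ℕ using hb.le
  exact ⟨a, b, by exact_mod_cast ha, by exact_mod_cast hb, by exact_mod_cast hbB,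
    by exact_mod_cast hclose⟩

lemma natCast_le_ceil_of_lt_add_one {n : ℕ} {c : ℝ} (h : (n : ℝ) < c + 1) :
    (n : ℝ) ≤ ⌈c⌉ := by
  have : (n : ℤ) - 1 < ⌈c⌉ := Int.lt_ceil.mpr (by push_cast; linarith)
  exact_mod_cast (by omega : (n : ℤ) ≤ ⌈c⌉)

lemma div_sq_mul_le_div_sqrt {a b p q B C : ℝ} (ha : 0 < a) (hb : 0 < b) (hp : 0 < p)
    (hq : 0 ≤ q) (hB : 0 < B) (hC : 0 ≤ C) (hbp : b * p ≤ 2 * (a * q))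
    (hcube : 2 * q ^ 3 ≤ C ^ 2 * B ^ 4 * p) :
    q / (B ^ 2 * a) ≤ C / √(a * b) := by
  have hsq : q ^ 2 * b ≤ C ^ 2 * B ^ 4 * a := by
    refine le_of_mul_le_mul_right ?_ hp
    calc q ^ 2 * b * p = q ^ 2 * (b * p) := by ring
      _ ≤ q ^ 2 * (2 * (a * q)) := by gcongr
      _ = 2 * q ^ 3 * a := by ring
      _ ≤ C ^ 2 * B ^ 4 * p * a := by gcongr
      _ = C ^ 2 * B ^ 4 * a * p := by ring
  rw [div_le_div_iff₀ (by positivity) (by positivity),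
    ← pow_le_pow_iff_left₀ (by positivity) (by positivity) two_ne_zero, mul_pow,
    sq_sqrt (by positivity)]
  nlinarith

section Normalized

variable {r : ℕ} {p q u t B : ℝ}

lemma mul_pow_le_sq (hq : 0 ≤ q) (hu : 0 < u) (ht : 0 ≤ t) (hN : q * p ^ r = u ^ (r + 2))
    (hplo : t ^ 3 * u ≤ p) : q * t ^ (3 * r) ≤ u ^ 2 := by
  have h : q * (t ^ 3 * u) ^ r ≤ q * p ^ r := by gcongr
  rw [hN, mul_pow, ← pow_mul, ← mul_assoc, pow_add, mul_comm (u ^ r)] at h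
  exact le_of_mul_le_mul_right h (by positivity)

lemma le_mul_of_normalized (hr : 1 ≤ r) (hq : 0 ≤ q) (hu : 0 < u) (ht : 1 ≤ t)
    (hN : q * p ^ r = u ^ (r + 2)) (hplo : t ^ 3 * u ≤ p) (hB : B * t ^ (2 * r + 1) = u) :
    q ≤ B * p := by
  have ht3 : 1 ≤ t ^ 3 := one_le_pow₀ ht
  have h : q * t ^ (2 * r + 1) ≤ B * p * t ^ (2 * r + 1) :=
    calc q * t ^ (2 * r + 1) ≤ q * t ^ (3 * r) := by gcongr; omega
      _ ≤ u * u := by rw [← sq]; exact mul_pow_le_sq hq hu (by linarith) hN hplo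
      _ ≤ u * p := by gcongr; nlinarith
      _ = B * p * t ^ (2 * r + 1) := by rw [← hB]; ring
  exact le_of_mul_le_mul_right h (by positivity)

lemma mul_le_of_normalized (hp : 0 < p) (hu : 0 < u) (ht : 0 < t) (hN : q * p ^ r = u ^ (r + 2))
    (hphi : p ≤ 2 * t ^ 3 * u) (hB : B * t ^ (2 * r + 1) = u) :
    B * p ≤ 2 ^ (r + 1) * t ^ (r + 2) * q := by
  have h : B * p * (t ^ (2 * r + 1) * p ^ r)
      ≤ 2 ^ (r + 1) * t ^ (r + 2) * q * (t ^ (2 * r + 1) * p ^ r) :=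
    calc B * p * (t ^ (2 * r + 1) * p ^ r) = u * p ^ (r + 1) := by rw [← hB]; ring
      _ ≤ u * (2 * t ^ 3 * u) ^ (r + 1) := by gcongr
      _ = 2 ^ (r + 1) * t ^ (r + 2) * (u ^ (r + 2)) * t ^ (2 * r + 1) := by ring
      _ = _ := by rw [← hN]; ring
  exact le_of_mul_le_mul_right h (by positivity)

lemma two_mul_cube_le (hr : 2 ≤ r) (hq : 0 ≤ q) (hu : 0 < u) (ht : 1 ≤ t)
    (hN : q * p ^ r = u ^ (r + 2)) (hplo : t ^ 3 * u ≤ p) (hB : B * t ^ (2 * r + 1) = u) {C : ℝ}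
    (hC : r ^ (2 * r + 3) * u * t ≤ 4 * t ^ r * C ^ 2) :
    2 * q ^ 3 ≤ C ^ 2 * B ^ 4 * p := by
  have hr8 : (8 : ℝ) ≤ r ^ (2 * r + 3) :=
    calc (8 : ℝ) = 2 ^ 3 := by norm_num
      _ ≤ r ^ 3 := by gcongr; exact_mod_cast hr
      _ ≤ r ^ (2 * r + 3) := pow_le_pow_right₀ (by norm_cast; omega) (by omega)
  have hqt := mul_pow_le_sq hq hu (by linarith) hN hplo
  have hp : 0 ≤ p := le_trans (by positivity) hplo
  have h : 2 * q ^ 3 * (4 * t ^ (9 * r + 4)) ≤ C ^ 2 * B ^ 4 * p * (4 * t ^ (9 * r + 4)) :=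
    calc 2 * q ^ 3 * (4 * t ^ (9 * r + 4)) = 8 * (q * t ^ (3 * r)) ^ 3 * t ^ 4 := by ring
      _ ≤ 8 * (u ^ 2) ^ 3 * t ^ 4 := by gcongr
      _ = 8 * u ^ 5 * t * (t ^ 3 * u) := by ring
      _ ≤ r ^ (2 * r + 3) * u ^ 5 * t * p := by gcongr
      _ = r ^ (2 * r + 3) * u * t * u ^ 4 * p := by ring
      _ ≤ 4 * t ^ r * C ^ 2 * u ^ 4 * p := by gcongr
      _ = C ^ 2 * B ^ 4 * p * (4 * t ^ (9 * r + 4)) := by rw [← hB]; ring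
  exact le_of_mul_le_mul_right h (by positivity)

/-- `hC` says `C ≥ r^(r+3/2) √u t^((1-r)/2) / 2`, the constant of the bound, squared so as
to avoid half-integer powers. -/
theorem exists_nat_approx_of_normalized (hr : 2 ≤ r) (hq : 0 < q) (hu : 0 < u) (ht : 1 ≤ t)
    {N : ℝ} (hfac : N = p ^ r * q) (hN : u ^ (r + 2) = N) (hplo : t ^ 3 * u ≤ p)
    (hphi : p ≤ 2 * t ^ 3 * u) (hB : B * t ^ (2 * r + 1) = u) (hB1 : 1 < B) {C : ℝ}
    (hC0 : 0 ≤ C) (hC : r ^ (2 * r + 3) * u * t ≤ 4 * t ^ r * C ^ 2) :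
    ∃ a b : ℕ, 0 < a ∧ 0 < b ∧ (a : ℝ) < 2 ^ (r + 1) * t ^ (r + 2) + 1 ∧
      (b : ℝ) ≤ B ∧
      a * q + r * b * p - (r + 1) * (a * b ^ r * N) ^ (1 / (r + 1 : ℝ)) < C / √(a * b) := by
  have hqp : q * p ^ r = u ^ (r + 2) := by rw [hN, hfac, mul_comm]
  have hp : 0 < p := lt_of_lt_of_le (by positivity) hplo
  have hB0 : 0 < B := by linarith
  obtain ⟨a, b, ha, hb, hbB, hab⟩ :=
    exists_nat_abs_mul_sub_lt_div hq hB1 (le_mul_of_normalized (by omega) hq.le hu ht hqp hplo hB)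
  have ha1 : (1 : ℝ) ≤ a := by exact_mod_cast ha
  have hb1 : (1 : ℝ) ≤ b := by exact_mod_cast hb
  have hqB : q / B < q := div_lt_self hq hB1
  obtain ⟨hlo, hhi⟩ := abs_lt.mp hab
  refine ⟨a, b, ha, hb, ?_, hbB, ?_⟩
  · have := mul_le_of_normalized hp hu (by linarith) hqp hphi hB
    have : (b : ℝ) * p ≤ B * p := by gcongr
    rw [← mul_lt_mul_iff_of_pos_right hq]
    linarith
  · -- `bp < aq + q/B < aq + q ≤ 2aq`
    have hbp : b * p ≤ 2 * (a * q) := by nlinarith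
    calc a * q + r * b * p - (r + 1) * (a * b ^ r * N) ^ (1 / (r + 1 : ℝ))
        = a * q + r * (b * p) - (r + 1) * (a * q * (b * p) ^ r) ^ (1 / (r + 1 : ℝ)) := by
          rw [hfac]; ring_nf
      _ ≤ (a * q - b * p) ^ 2 / (a * q) :=
          add_mul_sub_mul_rpow_le r (by positivity) (by positivity)
      _ < (q / B) ^ 2 / (a * q) :=
          div_lt_div_of_pos_right (sq_lt_sq' (by linarith) hhi) (by positivity)
      _ = q / (B ^ 2 * a) := by field_simp
      _ ≤ C / √(a * b) :=
          div_sq_mul_le_div_sqrt (by positivity) (by positivity) hp hq.le hB0 hC0 hbp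
            (two_mul_cube_le hr hq.le hu ht hqp hplo hB hC)

end Normalized

section Exponents

lemma rpow_pow_of_mul_eq {x e f : ℝ} (hx : 0 ≤ x) {n : ℕ} (h : e * n = f) :
    (x ^ e) ^ n = x ^ f := by
  rw [← rpow_natCast, ← rpow_mul hx, h]

variable (r j : ℕ)

lemma rpow_one_div_add_two_pow {x : ℝ} (hx : 0 ≤ x) :
    (x ^ ((1 : ℝ) / (r + 2))) ^ (r + 2) = x := by
  rw [rpow_pow_of_mul_eq hx (f := 1) (by push_cast; field_simp), rpow_one]

lemma two_rpow_div_three_pow_three : ((2 : ℝ) ^ ((j : ℝ) / 3)) ^ 3 = 2 ^ j := by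
  rw [rpow_pow_of_mul_eq zero_le_two (f := j) (by push_cast; ring), rpow_natCast]

lemma two_rpow_neg_mul_two_rpow_div_three_pow :
    (2 : ℝ) ^ (-(2 * (r : ℝ) + 1) * j / 3) * ((2 : ℝ) ^ ((j : ℝ) / 3)) ^ (2 * r + 1)
      = 1 := by
  rw [rpow_pow_of_mul_eq zero_le_two (f := (2 * r + 1) * j / 3) (by push_cast; ring),
    ← rpow_add two_pos, neg_mul, neg_div, neg_add_cancel, rpow_zero]

lemma two_rpow_eq_pow_mul_two_rpow_div_three_pow :
    (2 : ℝ) ^ (((r : ℝ) + 2) * j / 3 + r + 1)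
      = 2 ^ (r + 1) * ((2 : ℝ) ^ ((j : ℝ) / 3)) ^ (r + 2) := by
  rw [rpow_pow_of_mul_eq zero_le_two (f := (r + 2) * j / 3) (by push_cast; ring),
    ← rpow_natCast, ← rpow_add two_pos]
  push_cast
  ring_nf

lemma four_mul_two_rpow_div_three_pow_mul_sq {x : ℝ} (hx : 0 ≤ x) :
    4 * ((2 : ℝ) ^ ((j : ℝ) / 3)) ^ r
        * ((r : ℝ) ^ ((r : ℝ) + 3 / 2) * x ^ ((1 : ℝ) / (2 * (r + 2)))
          * 2 ^ ((1 - (r : ℝ)) * j / 6 - 1)) ^ 2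
      = r ^ (2 * r + 3) * x ^ ((1 : ℝ) / (r + 2)) * 2 ^ ((j : ℝ) / 3) := by
  have hr : ((r : ℝ) ^ ((r : ℝ) + 3 / 2)) ^ 2 = r ^ (2 * r + 3) := by
    rw [rpow_pow_of_mul_eq r.cast_nonneg (f := (2 * r + 3 : ℕ)) (by push_cast; ring),
      rpow_natCast]
  have hx : (x ^ ((1 : ℝ) / (2 * (r + 2)))) ^ 2 = x ^ ((1 : ℝ) / (r + 2)) :=
    rpow_pow_of_mul_eq hx (by push_cast; field_simp)
  have h2 : 4 * ((2 : ℝ) ^ ((j : ℝ) / 3)) ^ r * ((2 : ℝ) ^ ((1 - (r : ℝ)) * j / 6 - 1)) ^ 2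
      = 2 ^ ((j : ℝ) / 3) := by
    rw [rpow_pow_of_mul_eq zero_le_two rfl,
      rpow_pow_of_mul_eq zero_le_two (f := (1 - r) * j / 3 - 2) (by push_cast; ring),
      show (4 : ℝ) = 2 ^ (2 : ℝ) by norm_num, ← rpow_add two_pos, ← rpow_add two_pos]
    congr 1
    ring
  rw [mul_pow, mul_pow, hr, hx]
  linear_combination (r ^ (2 * r + 3) * x ^ ((1 : ℝ) / (r + 2))) * h2

end Exponents

theorem stmt_12_general (r j : ℕ) (hr : 2 ≤ r) (N p q : ℕ) (hN : 0 < N)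
    (hq : 0 < q) (hfac : N = p ^ r * q)
    (B : ℝ) (hB : B = (N : ℝ) ^ ((1 : ℝ) / (r + 2)) * 2 ^ (-(2 * (r : ℝ) + 1) * j / 3))
    (hB1 : 1 < B)
    (hplo : (2 : ℝ) ^ (j : ℕ) * (N : ℝ) ^ ((1 : ℝ) / (r + 2)) ≤ p)
    (hphi : (p : ℝ) ≤ 2 ^ (j + 1) * (N : ℝ) ^ ((1 : ℝ) / (r + 2))) :
    ∃ a b : ℕ, 0 < a ∧ 0 < b ∧
      (a : ℝ) ≤ ⌈(2 : ℝ) ^ (((r : ℝ) + 2) * j / 3 + r + 1)⌉ ∧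
      (b : ℝ) ≤ B ∧
      (a : ℝ) * q + r * b * p - (r + 1) * ((a : ℝ) * b ^ r * N) ^ ((1 : ℝ) / (r + 1))
        < (r : ℝ) ^ ((r : ℝ) + 3 / 2) / Real.sqrt (a * b) * (N : ℝ) ^ ((1 : ℝ) / (2 * (r + 2)))
            * 2 ^ ((1 - (r : ℝ)) * j / 6 - 1) := by
  have hN0 : (0 : ℝ) ≤ N := N.cast_nonneg
  rw [← two_rpow_div_three_pow_three] at hplo
  rw [pow_succ', ← two_rpow_div_three_pow_three] at hphi
  obtain ⟨a, b, ha, hb, ha_lt, hbB, hmain⟩ :=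
    exists_nat_approx_of_normalized (p := p) (q := q) hr
      (by exact_mod_cast hq) (by positivity) (one_le_rpow one_le_two (by positivity))
      (by exact_mod_cast hfac) (rpow_one_div_add_two_pow r hN0) hplo hphi
      (by rw [hB, mul_assoc, two_rpow_neg_mul_two_rpow_div_three_pow, mul_one]) hB1
      (by positivity) (four_mul_two_rpow_div_three_pow_mul_sq r j hN0).ge
  refine ⟨a, b, ha, hb, natCast_le_ceil_of_lt_add_one ?_, hbB, ?_⟩
  · rwa [two_rpow_eq_pow_mul_two_rpow_div_three_pow]
  · rwa [div_mul_eq_mul_div, div_mul_eq_mul_div]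

theorem stmt_12 (r j : ℕ) (hr : 2 ≤ r) (N p q : ℕ) (hN : 0 < N)
    (hp : 0 < p) (hq : 0 < q) (hfac : N = p ^ r * q)
    (B : ℝ) (hB : B = (N : ℝ) ^ ((1 : ℝ) / (r + 2)) * 2 ^ (-(2 * (r : ℝ) + 1) * j / 3))
    (hB1 : 1 < B)
    (hplo : (2 : ℝ) ^ (j : ℕ) * (N : ℝ) ^ ((1 : ℝ) / (r + 2)) ≤ p)
    (hphi : (p : ℝ) ≤ 2 ^ (j + 1) * (N : ℝ) ^ ((1 : ℝ) / (r + 2))) :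
    ∃ a b : ℕ, 0 < a ∧ 0 < b ∧
      (a : ℝ) ≤ ⌈(2 : ℝ) ^ (((r : ℝ) + 2) * j / 3 + r + 1)⌉ ∧
      (b : ℝ) ≤ B ∧
      (a : ℝ) * q + r * b * p - (r + 1) * ((a : ℝ) * b ^ r * N) ^ ((1 : ℝ) / (r + 1))
        < (r : ℝ) ^ ((r : ℝ) + 3 / 2) / Real.sqrt (a * b) * (N : ℝ) ^ ((1 : ℝ) / (2 * (r + 2)))
            * 2 ^ ((1 - (r : ℝ)) * j / 6 - 1) :=
  stmt_12_general r j hr N p q hN hq hfac B hB hB1 hplo hphi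
end

section
/- Let r ≥ 2 and N > 1 be integers with N = p^r * q for integers p > 1 and q ≥ 1, and suppose N is not an r-th power (i.e., ⌊N^(1/r)⌋^r ≠ N). Then N has a nontrivial divisor d with 1 < d ≤ N^(1/(r+1)). -/
theorem stmt_19 (r N p q : ℕ) (hr : 2 ≤ r) (hN : 1 < N)
    (hfac : N = p ^ r * q) (hp : 1 < p) (hq : 1 ≤ q)
    (hns : (⌊(N : ℝ) ^ ((1 : ℝ) / r)⌋₊) ^ r ≠ N) :
    ∃ d : ℕ, 1 < d ∧ d ∣ N ∧ (d : ℝ) ≤ (N : ℝ) ^ ((1 : ℝ) / (r + 1)) := by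
  have hr0 : (r : ℝ) ≠ 0 := by positivity
  rcases eq_or_lt_of_le hq with hq1 | hq2
  · exfalso
    apply hns
    have hNp : N = p ^ r := by rw [hfac, ← hq1, mul_one]
    have hcast : ((N : ℝ)) = (p : ℝ) ^ (r : ℕ) := by rw [hNp]; push_cast; ring
    have : (N : ℝ) ^ ((1 : ℝ) / r) = p := by
      rw [hcast, ← Real.rpow_natCast (p : ℝ) r, ← Real.rpow_mul (by positivity)]
      rw [mul_one_div, div_self hr0, Real.rpow_one]
    rw [this, Nat.floor_natCast, hNp]
  · set d := min p q with hd
    have hd1 : 1 < d := lt_min hp hq2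
    have hdvd : d ∣ N := by
      rcases min_cases p q with ⟨h, _⟩ | ⟨h, _⟩
      · rw [hd, h, hfac]
        exact Dvd.dvd.mul_right (dvd_pow_self p (by omega)) q
      · rw [hd, h, hfac]
        exact Dvd.intro_left _ rfl
    have hpow : d ^ (r + 1) ≤ N := by
      calc d ^ (r + 1) = d ^ r * d := by ring
        _ ≤ p ^ r * q := Nat.mul_le_mul (Nat.pow_le_pow_left (min_le_left p q) r)
            (min_le_right p q)
        _ = N := hfac.symm
    refine ⟨d, hd1, hdvd, ?_⟩
    have hpowR : ((d : ℝ)) ^ ((r : ℕ) + 1) ≤ (N : ℝ) := by exact_mod_cast hpow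
    have hr1 : ((r : ℝ) + 1) ≠ 0 := by positivity
    have key : ((d : ℝ) ^ ((r : ℕ) + 1)) ^ ((1 : ℝ) / (r + 1)) ≤ (N : ℝ) ^ ((1 : ℝ) / (r + 1)) :=
      Real.rpow_le_rpow (by positivity) hpowR (by positivity)
    calc (d : ℝ) = ((d : ℝ) ^ ((r : ℕ) + 1)) ^ ((1 : ℝ) / (r + 1)) := by
          rw [← Real.rpow_natCast (d : ℝ) (r + 1), ← Real.rpow_mul (by positivity)]
          push_cast
          rw [mul_one_div, div_self hr1, Real.rpow_one]
      _ ≤ (N : ℝ) ^ ((1 : ℝ) / (r + 1)) := key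
end
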